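/- arXiv:2604.07519 — 2 statements merged into one kernel-verified Lean document; each statement's English description precedes it below -/
import Mathlib

section
/- The semigroup Cone(h1,...,h8) ∩ Z^5 is generated as a monoid by the nine elements h1,...,h8,h9, where h9=(1,1,0,1,-1). -/
open Matrix BigOperators

/-- The nine lattice vectors h1,...,h9 in ℤ^5 (indexed 0,...,8). -/
def hv : Fin 9 → Fin 5 → ℤ :=
  ![![1,0,0,0,0], ![0,1,0,0,0], ![0,0,1,0,0], ![0,0,0,1,0], ![0,0,0,0,1],
    ![2,2,-1,1,-2], ![1,2,-1,1,-1], ![1,2,0,0,-1], ![1,1,0,1,-1]]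

/-- Coordinatewise cast of an integer vector to a real vector. -/
def toR (u : Fin 5 → ℤ) : Fin 5 → ℝ := fun i => (u i : ℝ)

/-- The cone of nonnegative real combinations of a finite family of vectors in ℝ^5. -/
def coneOf {k : ℕ} (v : Fin k → Fin 5 → ℝ) : Set (Fin 5 → ℝ) :=
  {x | ∃ c : Fin k → ℝ, (∀ i, 0 ≤ c i) ∧ x = ∑ i, c i • v i}

/-- The cone ω generated by h1,...,h8 in ℝ^5. -/
def ω : Set (Fin 5 → ℝ) := coneOf (fun i : Fin 8 => toR (hv i.castSucc))

/-!
Lattice points of ω satisfy the nine facet inequalities of ω. Conversely, if a lattice point `u`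
satisfies them and has a negative coordinate, then subtracting a suitable one of h6, ..., h9
preserves all nine inequalities. These four vectors have positive first coordinate, and the first
coordinate stays nonnegative, so induction on it ends at a point with nonnegative coordinates,
a sum of h1, ..., h5. The other inclusion holds because h9 = (h3 + h4 + h6) / 2 lies in ω.
-/

theorem coneOf_eq_hull {k : ℕ} (v : Fin k → Fin 5 → ℝ) :
    coneOf v = PointedCone.hull ℝ (Set.range v) := by
  ext x
  rw [SetLike.mem_coe, Submodule.mem_span_range_iff_exists_fun]
  constructor
  · rintro ⟨c, hc, rfl⟩
    exact ⟨fun i => ⟨c i, hc i⟩, rfl⟩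
  · rintro ⟨c, rfl⟩
    exact ⟨fun i => c i, fun i => (c i).2, rfl⟩

def ωCone : PointedCone ℝ (Fin 5 → ℝ) :=
  PointedCone.hull ℝ (Set.range fun i : Fin 8 => toR (hv i.castSucc))

theorem ω_eq_ωCone : ω = ωCone := coneOf_eq_hull _

theorem toR_hv_mem_ωCone (i : Fin 9) : toR (hv i) ∈ ωCone := by
  have hgen (i : Fin 8) : toR (hv i.castSucc) ∈ ωCone := PointedCone.subset_hull ⟨i, rfl⟩
  induction i using Fin.lastCases with
  | cast i => exact hgen i
  | last =>
    have h9 : toR (hv 8) = (1 / 2 : ℝ) • (toR (hv 2) + toR (hv 3) + toR (hv 5)) := by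
      ext j
      fin_cases j <;> simp only [toR, hv, Matrix.cons_val, Pi.smul_apply, Pi.add_apply] <;> norm_num
    show toR (hv 8) ∈ ωCone
    rw [h9]
    exact PointedCone.smul_mem _ (by norm_num) (add_mem (add_mem (hgen 2) (hgen 3)) (hgen 5))

theorem toR_mem_ω_of_mem_closure {u : Fin 5 → ℤ} (hu : u ∈ AddSubmonoid.closure (Set.range hv)) :
    toR u ∈ ω := by
  rw [ω_eq_ωCone]
  exact (AddSubmonoid.closure_le
    (S := ωCone.toAddSubmonoid.comap ((Int.castAddHom ℝ).compLeft (Fin 5)))).2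
    (Set.range_subset_iff.2 toR_hv_mem_ωCone) hu

-- Inner normals of the nine facets of ω.
def facetNormal : Fin 9 → Fin 5 → ℤ :=
  ![![1,0,0,0,0], ![0,1,0,0,0], ![0,0,0,1,0], ![0,0,1,1,0], ![0,1,0,0,1],
    ![0,1,0,2,2], ![0,1,2,0,0], ![1,0,0,0,1], ![1,0,1,0,0]]

theorem facetNormal_dotProduct_hv_nonneg (j : Fin 9) (i : Fin 8) :
    0 ≤ facetNormal j ⬝ᵥ hv i.castSucc := by
  revert j i; decide

theorem dotProduct_nonneg_of_mem_coneOf {k : ℕ} {v : Fin k → Fin 5 → ℝ} {w x : Fin 5 → ℝ}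
    (hw : ∀ i, 0 ≤ w ⬝ᵥ v i) (hx : x ∈ coneOf v) : 0 ≤ w ⬝ᵥ x := by
  obtain ⟨c, hc, rfl⟩ := hx
  rw [dotProduct_sum]
  exact Finset.sum_nonneg fun i _ => by rw [dotProduct_smul]; exact smul_nonneg (hc i) (hw i)

theorem cast_dotProduct_eq_toR (v w : Fin 5 → ℤ) : ((v ⬝ᵥ w : ℤ) : ℝ) = toR v ⬝ᵥ toR w :=
  (Int.castRingHom ℝ).map_dotProduct v w

def InFacets (u : Fin 5 → ℤ) : Prop := ∀ j, 0 ≤ facetNormal j ⬝ᵥ u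

theorem inFacets_of_toR_mem_ω {u : Fin 5 → ℤ} (hu : toR u ∈ ω) : InFacets u := fun j => by
  have hgen (i : Fin 8) : 0 ≤ toR (facetNormal j) ⬝ᵥ toR (hv i.castSucc) := by
    rw [← cast_dotProduct_eq_toR, Int.cast_nonneg_iff]
    exact facetNormal_dotProduct_hv_nonneg j i
  have := dotProduct_nonneg_of_mem_coneOf hgen hu
  rwa [← cast_dotProduct_eq_toR, Int.cast_nonneg_iff] at this

theorem inFacets_iff (u : Fin 5 → ℤ) : InFacets u ↔
    0 ≤ u 0 ∧ 0 ≤ u 1 ∧ 0 ≤ u 3 ∧ 0 ≤ u 2 + u 3 ∧ 0 ≤ u 1 + u 4 ∧ 0 ≤ u 1 + 2 * u 3 + 2 * u 4 ∧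
      0 ≤ u 1 + 2 * u 2 ∧ 0 ≤ u 0 + u 4 ∧ 0 ≤ u 0 + u 2 := by
  simp [InFacets, Fin.forall_fin_succ, facetNormal, dotProduct, Fin.sum_univ_five]

theorem mem_closure_range_single_of_nonneg {ι : Type*} [Fintype ι] [DecidableEq ι] {u : ι → ℤ}
    (hu : 0 ≤ u) : u ∈ AddSubmonoid.closure (Set.range fun i => (Pi.single i 1 : ι → ℤ)) := by
  rw [← Finset.univ_sum_single u]
  refine sum_mem fun i _ => ?_
  have hsingle : Pi.single i (u i) = (u i).toNat • (Pi.single i 1 : ι → ℤ) := by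
    rw [← Pi.single_smul', nsmul_one, Int.toNat_of_nonneg (hu i)]
  rw [hsingle]
  exact nsmul_mem (AddSubmonoid.subset_closure (Set.mem_range_self i)) _

theorem range_single_subset_range_hv :
    (Set.range fun i => (Pi.single i 1 : Fin 5 → ℤ)) ⊆ Set.range hv := by
  rintro _ ⟨i, rfl⟩
  exact ⟨Fin.castLE (by norm_num) i, by revert i; decide⟩

theorem exists_inFacets_sub_hv {u : Fin 5 → ℤ} (hu : InFacets u) (hneg : u 2 < 0 ∨ u 4 < 0) :
    ∃ k, 0 < hv k 0 ∧ InFacets (u - hv k) := by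
  rw [inFacets_iff] at hu
  rcases lt_or_ge (u 2) 0 with hc | hc
  · by_cases h : 1 ≤ u 1 + u 4 ∧ 2 ≤ u 1 + 2 * u 3 + 2 * u 4
    · exact ⟨6, by decide, by simp only [inFacets_iff, Pi.sub_apply, hv, Matrix.cons_val]; omega⟩
    · exact ⟨5, by decide, by simp only [inFacets_iff, Pi.sub_apply, hv, Matrix.cons_val]; omega⟩
  · by_cases h : 1 ≤ u 1 + u 4 ∧ 2 ≤ u 1 + 2 * u 2
    · exact ⟨7, by decide, by simp only [inFacets_iff, Pi.sub_apply, hv, Matrix.cons_val]; omega⟩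
    by_cases h' : 1 ≤ u 1 + 2 * u 3 + 2 * u 4
    · exact ⟨8, by decide, by simp only [inFacets_iff, Pi.sub_apply, hv, Matrix.cons_val]; omega⟩
    · exact ⟨5, by decide, by simp only [inFacets_iff, Pi.sub_apply, hv, Matrix.cons_val]; omega⟩

theorem mem_closure_of_inFacets (u : Fin 5 → ℤ) (hu : InFacets u) :
    u ∈ AddSubmonoid.closure (Set.range hv) := by
  by_cases hce : 0 ≤ u 2 ∧ 0 ≤ u 4
  · have hnonneg : 0 ≤ u := by
      rw [inFacets_iff] at hu
      intro i; fin_cases i <;> simp <;> omega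
    exact AddSubmonoid.closure_mono range_single_subset_range_hv
      (mem_closure_range_single_of_nonneg hnonneg)
  · obtain ⟨k, hk, hsub⟩ := exists_inFacets_sub_hv hu (by omega)
    have := mem_closure_of_inFacets (u - hv k) hsub
    simpa using add_mem this (AddSubmonoid.subset_closure ⟨k, rfl⟩)
termination_by (u 0).toNat
decreasing_by have := ((inFacets_iff _).1 hsub).1; rw [Pi.sub_apply] at this ⊢; omega

/-- The semigroup ω ∩ ℤ^5 is generated as a monoid by h1,...,h9. -/
theorem stmt_6 :
    {u : Fin 5 → ℤ | toR u ∈ ω} = ↑(AddSubmonoid.closure (Set.range hv)) :=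
  Set.ext fun u => ⟨fun hu => mem_closure_of_inFacets u (inFacets_of_toR_mem_ω hu),
    toR_mem_ω_of_mem_closure⟩
end

section
/- Let H = {h1, h3-h2, h9-h2, h3-h4, h9-h4, h3-h5, h7-h5, h3-h6, h7-h6} ⊂ Z^5 and let R be the additive submonoid of Z^5 generated by H. Then h2, h4, h5, h6, h3, h7, h8, h9 all belong to R; explicitly h2=(h7-h6)+(h9-h4), h4=(h7-h6)+(h9-h2), h5=(h7-h6)+h1, h6=(h7-h5)+h1, h3=(h3-h5)+h5, h7=(h7-h5)+h5, h8=(h8-h1)+h1 with h8-h1=(h7-h1)+(h3-h4) and h7-h1=(h7-h5)+(h7-h6), and h9=(h9-h1)+h1 with h9-h1=(h7-h1)+(h3-h2). -/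
open Matrix BigOperators

/-- The generating set H = {h1, h3-h2, h9-h2, h3-h4, h9-h4, h3-h5, h7-h5, h3-h6, h7-h6}. -/
def Hset : Set (Fin 5 → ℤ) :=
  {hv 0, hv 2 - hv 1, hv 8 - hv 1, hv 2 - hv 3, hv 8 - hv 3,
   hv 2 - hv 4, hv 6 - hv 4, hv 2 - hv 5, hv 6 - hv 5}

/-- All of h1,...,h9 belong to the submonoid R of ℤ^5 generated by H. -/
theorem stmt_12 : ∀ i : Fin 9, hv i ∈ AddSubmonoid.closure Hset := by
  set R := AddSubmonoid.closure Hset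
  have step : ∀ {x y z : Fin 5 → ℤ}, x = y + z → y ∈ R → z ∈ R → x ∈ R :=
    fun hx hy hz => hx.symm ▸ add_mem hy hz
  have gen : Hset ⊆ (R : Set (Fin 5 → ℤ)) := AddSubmonoid.subset_closure
  simp only [Hset, Set.insert_subset_iff, Set.singleton_subset_iff, SetLike.mem_coe] at gen
  -- `rab` is `h_a - h_b ∈ R` in the paper's 1-based numbering; `hv` is 0-based.
  obtain ⟨r1, r32, r92, r34, r94, r35, r75, -, r76⟩ := gen
  have r5 : hv 4 ∈ R := step (by decide) r76 r1
  have r6 : hv 5 ∈ R := step (by decide) r75 r1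
  have r3 : hv 2 ∈ R := step (by decide) r35 r5
  have r7 : hv 6 ∈ R := step (by decide) r75 r5
  have r2 : hv 1 ∈ R := step (by decide) r76 r94
  have r4 : hv 3 ∈ R := step (by decide) r76 r92
  have r71 : hv 6 - hv 0 ∈ R := step (by decide) r75 r76
  have r81 : hv 7 - hv 0 ∈ R := step (by decide) r71 r34
  have r91 : hv 8 - hv 0 ∈ R := step (by decide) r71 r32
  have r8 : hv 7 ∈ R := step (by decide) r81 r1
  have r9 : hv 8 ∈ R := step (by decide) r91 r1
  intro i
  fin_cases i <;> assumption
end
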